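/- If eqlev(r', s') > eqlev(r, s), with r' ≤ r and s' ≤ s, then eqlev(r, (s − s') + r') = eqlev(r, s) (the REDUCE step preserves the equivalence level when the ancestor pair has strictly greater level). -/

import Mathlib

/-- A labeled Petri net: places `P`, transitions `T`, action labels `Act`. -/
structure LPN (P T Act : Type) where
  pre : T → P → ℕ
  post : T → P → ℕ
  lab : T → Act

variable {P T Act : Type}

/-- Firing relation: `M` fires `t` yielding `M'`. -/
def Fires (N : LPN P T Act) (M : P → ℕ) (t : T) (M' : P → ℕ) : Prop :=
  N.pre t ≤ M ∧ M' = fun p => M p - N.pre t p + N.post t p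

/-- `R` satisfies the (ordinary) transfer property w.r.t. `R'`. -/
def Transfer (N : LPN P T Act) (R R' : (P → ℕ) → (P → ℕ) → Prop) : Prop :=
  ∀ M₁ M₂, R M₁ M₂ → ∀ t M₁', Fires N M₁ t M₁' →
    ∃ u M₂', N.lab u = N.lab t ∧ Fires N M₂ u M₂' ∧ R' M₁' M₂'

/-- `R` is a bisimulation. -/
def IsBisim (N : LPN P T Act) (R : (P → ℕ) → (P → ℕ) → Prop) : Prop :=
  Transfer N R R ∧ Transfer N (fun a b => R b a) (fun a b => R b a)

/-- Bisimilarity `∼`. -/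
def Bisim (N : LPN P T Act) (M₁ M₂ : P → ℕ) : Prop :=
  ∃ R, IsBisim N R ∧ R M₁ M₂

/-- A congruence on markings: an equivalence compatible with addition. -/
def IsCongruence (ρ : (P → ℕ) → (P → ℕ) → Prop) : Prop :=
  Equivalence ρ ∧ ∀ r₁ r₂ s, ρ r₁ r₂ → ρ (r₁ + s) (r₂ + s)

/-- Resource similarity `≈`. -/
def ResSim (N : LPN P T Act) (r s : P → ℕ) : Prop :=
  ∀ w, Bisim N (r + w) (s + w)

/-- `R` satisfies the resource transfer property w.r.t. `R'`. -/
def ResTransfer (N : LPN P T Act) (R R' : (P → ℕ) → (P → ℕ) → Prop) : Prop :=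
  ∀ r s, R r s → ∀ t r', Fires N (fun p => r p + (N.pre t p - r p)) t r' →
    ∃ u s', N.lab u = N.lab t ∧
      Fires N (fun p => s p + (N.pre t p - r p)) u s' ∧ R' r' s'

/-- `R` is a resource bisimulation. -/
def IsResBisim (N : LPN P T Act) (R : (P → ℕ) → (P → ℕ) → Prop) : Prop :=
  ResTransfer N R R ∧ ResTransfer N (fun a b => R b a) (fun a b => R b a)

/-- Resource bisimilarity `≃`. -/
def ResBisim (N : LPN P T Act) (r s : P → ℕ) : Prop :=
  ∃ R, IsResBisim N R ∧ R r s

/-- Stratified bisimilarity `∼ᵢ`. -/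
def Strat (N : LPN P T Act) : ℕ → (P → ℕ) → (P → ℕ) → Prop
  | 0, _, _ => True
  | i + 1, M₁, M₂ =>
      (∀ t M₁', Fires N M₁ t M₁' →
        ∃ u M₂', N.lab u = N.lab t ∧ Fires N M₂ u M₂' ∧ Strat N i M₁' M₂') ∧
      (∀ t M₂', Fires N M₂ t M₂' →
        ∃ u M₁', N.lab u = N.lab t ∧ Fires N M₁ u M₁' ∧ Strat N i M₂' M₁')

/-- Stratified resource bisimilarity `≃ᵢ`. -/
def StratRes (N : LPN P T Act) : ℕ → (P → ℕ) → (P → ℕ) → Prop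
  | 0, _, _ => True
  | i + 1, r, s =>
      (∀ t r', Fires N (fun p => r p + (N.pre t p - r p)) t r' →
        ∃ u s', N.lab u = N.lab t ∧
          Fires N (fun p => s p + (N.pre t p - r p)) u s' ∧ StratRes N i r' s') ∧
      (∀ t s', Fires N (fun p => s p + (N.pre t p - s p)) t s' →
        ∃ u r', N.lab u = N.lab t ∧
          Fires N (fun p => r p + (N.pre t p - s p)) u r' ∧ StratRes N i s' r')

/-- The equivalence level: the largest `i` with `r ≃ᵢ s` (`⊤` = ω if all `i`). -/
noncomputable def eqlev (N : LPN P T Act) (r s : P → ℕ) : ℕ∞ :=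
  sSup {n : ℕ∞ | ∃ i : ℕ, n = (i : ℕ∞) ∧ StratRes N i r s}

/-! Every `≃ᵢ` is a congruence, so adding `s - s'` to both sides gives
`eqlev(s, (s - s') + r') ≥ eqlev(r', s') > eqlev(r, s)`. Every `≃ᵢ` is also an equivalence, so
`eqlev` satisfies the ultrametric inequality `min (eqlev r s) (eqlev s u) ≤ eqlev r u`; hence in
the triangle `r, s, (s - s') + r'` the two sides at `r` have the same level. -/

/-- One half of `≃ᵢ₊₁`: the tokens `N.pre t - r` that `r` lacks for `t` are lent to both sides. -/
def ResMatches (N : LPN P T Act) (R : (P → ℕ) → (P → ℕ) → Prop) (r s : P → ℕ) : Prop :=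
  ∀ t r', Fires N (r + (N.pre t - r)) t r' →
    ∃ u s', N.lab u = N.lab t ∧ Fires N (s + (N.pre t - r)) u s' ∧ R r' s'

section

variable {N : LPN P T Act}

theorem stratRes_succ_iff {i : ℕ} {r s : P → ℕ} :
    StratRes N (i + 1) r s ↔
      ResMatches N (StratRes N i) r s ∧ ResMatches N (StratRes N i) s r :=
  Iff.rfl

theorem Fires.add_right {M M' : P → ℕ} {t : T} (h : Fires N M t M') (w : P → ℕ) :
    Fires N (M + w) t (M' + w) := by
  obtain ⟨hle, rfl⟩ := h
  refine ⟨hle.trans le_self_add, funext fun p => ?_⟩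
  have : N.pre t p ≤ M p := hle p
  simp only [Pi.add_apply]
  omega

theorem Fires.of_add {M w M'' : P → ℕ} {t : T} (h : Fires N (M + w) t M'')
    (hle : N.pre t ≤ M) : ∃ M', Fires N M t M' ∧ M'' = M' + w := by
  refine ⟨_, ⟨hle, rfl⟩, ?_⟩
  obtain ⟨-, rfl⟩ := h
  funext p
  have : N.pre t p ≤ M p := hle p
  simp only [Pi.add_apply]
  omega

namespace ResMatches

variable {R R' : (P → ℕ) → (P → ℕ) → Prop} {r s : P → ℕ}

theorem mono (h : ResMatches N R r s) (hR : ∀ a b, R a b → R' a b) : ResMatches N R' r s :=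
  fun t r' hr ↦ (h t r' hr).imp fun _ ↦ .imp fun _ ↦ .imp_right <| .imp_right <| hR _ _

theorem of_enabled (h : ResMatches N R r s) {t : T} (ht : N.pre t ≤ r) {r' : P → ℕ}
    (hr : Fires N r t r') : ∃ u s', N.lab u = N.lab t ∧ Fires N s u s' ∧ R r' s' := by
  have hloan : N.pre t - r = 0 := tsub_eq_zero_of_le ht
  simpa only [hloan, add_zero] using h t r' (by simpa only [hloan, add_zero] using hr)

/-- Lending `c := N.pre t - r` to `r + w` and to `s + w` is the same as lending `c` to `r` and
to `s` and then adding the part `w - c` of `w` that the loan did not cover. -/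
theorem add_right (h : ResMatches N R r s) (hR : ∀ a b v, R a b → R' (a + v) (b + v))
    (w : P → ℕ) : ResMatches N R' (r + w) (s + w) := by
  intro t M hM
  set c := N.pre t - r
  have hsplit : ∀ x : P → ℕ, x + w + (N.pre t - (r + w)) = x + c + (w - c) := fun x ↦
    funext fun p ↦ by simp only [c, Pi.add_apply, Pi.sub_apply]; omega
  rw [hsplit] at hM
  obtain ⟨r', hr', rfl⟩ := hM.of_add (le_add_tsub : N.pre t ≤ r + c)
  obtain ⟨u, s', hlab, hs', hR'⟩ := h t r' hr'
  exact ⟨u, s' + (w - c), hlab, hsplit s ▸ hs'.add_right _, hR _ _ _ hR'⟩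

theorem comp {u : P → ℕ} (h : ResMatches N R r s)
    (hsu : ∀ c, ResMatches N R' (s + c) (u + c)) :
    ResMatches N (Relation.Comp R R') r u := by
  intro t r' hr
  obtain ⟨v, s', hlab, hs', hR⟩ := h t r' hr
  obtain ⟨w, u', hlab', hu', hR'⟩ := (hsu _).of_enabled hs'.1 hs'
  exact ⟨w, u', hlab'.trans hlab, hu', s', hR, hR'⟩

end ResMatches

theorem stratRes_succ_le {i : ℕ} {r s : P → ℕ} (h : StratRes N (i + 1) r s) :
    StratRes N i r s := by
  induction i generalizing r s with
  | zero => trivial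
  | succ i ih =>
    obtain ⟨h₁, h₂⟩ := stratRes_succ_iff.1 h
    exact ⟨h₁.mono fun _ _ ↦ ih, h₂.mono fun _ _ ↦ ih⟩

theorem stratRes_antitone : Antitone (StratRes N) :=
  antitone_nat_of_succ_le fun _ _ _ ↦ stratRes_succ_le

theorem stratRes_symm {i : ℕ} {r s : P → ℕ} (h : StratRes N i r s) : StratRes N i s r := by
  cases i with
  | zero => trivial
  | succ i => exact h.symm

theorem stratRes_add_right {i : ℕ} {r s : P → ℕ} (h : StratRes N i r s) (w : P → ℕ) :
    StratRes N i (r + w) (s + w) := by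
  induction i generalizing r s w with
  | zero => trivial
  | succ i ih =>
    obtain ⟨h₁, h₂⟩ := stratRes_succ_iff.1 h
    exact ⟨h₁.add_right (fun _ _ v h ↦ ih h v) w, h₂.add_right (fun _ _ v h ↦ ih h v) w⟩

theorem stratRes_trans {i : ℕ} {r s u : P → ℕ} (hrs : StratRes N i r s) (hsu : StratRes N i s u) :
    StratRes N i r u := by
  induction i generalizing r s u with
  | zero => trivial
  | succ i ih =>
    obtain ⟨hrs₁, hsr₁⟩ := stratRes_succ_iff.1 hrs
    obtain ⟨hsu₁, hus₁⟩ := stratRes_succ_iff.1 hsu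
    have htrans : ∀ a b, Relation.Comp (StratRes N i) (StratRes N i) a b → StratRes N i a b :=
      fun _ _ ⟨_, hax, hxb⟩ ↦ ih hax hxb
    exact ⟨(hrs₁.comp fun c ↦ (stratRes_succ_iff.1 (stratRes_add_right hsu c)).1).mono htrans,
      (hus₁.comp fun c ↦ (stratRes_succ_iff.1 (stratRes_add_right hrs c)).2).mono htrans⟩

theorem natCast_le_eqlev_iff {i : ℕ} {r s : P → ℕ} :
    (i : ℕ∞) ≤ eqlev N r s ↔ StratRes N i r s := by
  refine ⟨fun hi ↦ ?_, fun h ↦ le_sSup ⟨i, rfl, h⟩⟩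
  cases i with
  | zero => trivial
  | succ i =>
    rw [Nat.cast_succ, ENat.add_one_le_iff (ENat.natCast_ne_top i), eqlev, lt_sSup_iff] at hi
    obtain ⟨_, ⟨j, rfl, hj⟩, hij⟩ := hi
    exact stratRes_antitone (Nat.cast_lt.1 hij) r s hj

theorem eqlev_le_eqlev {r s r' s' : P → ℕ}
    (h : ∀ i, StratRes N i r s → StratRes N i r' s') : eqlev N r s ≤ eqlev N r' s' :=
  ENat.forall_natCast_le_iff_le.1 fun i hi ↦
    natCast_le_eqlev_iff.2 (h i (natCast_le_eqlev_iff.1 hi))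

theorem eqlev_comm (r s : P → ℕ) : eqlev N r s = eqlev N s r :=
  le_antisymm (eqlev_le_eqlev fun _ ↦ stratRes_symm) (eqlev_le_eqlev fun _ ↦ stratRes_symm)

theorem eqlev_le_eqlev_add_right (r s w : P → ℕ) : eqlev N r s ≤ eqlev N (r + w) (s + w) :=
  eqlev_le_eqlev fun _ h ↦ stratRes_add_right h w

theorem min_eqlev_le_eqlev (r s u : P → ℕ) : min (eqlev N r s) (eqlev N s u) ≤ eqlev N r u :=
  ENat.forall_natCast_le_iff_le.1 fun _ hi ↦ natCast_le_eqlev_iff.2 <|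
    stratRes_trans (natCast_le_eqlev_iff.1 (le_min_iff.1 hi).1)
      (natCast_le_eqlev_iff.1 (le_min_iff.1 hi).2)

theorem eqlev_eq_of_lt {r s u : P → ℕ} (h : eqlev N r s < eqlev N s u) :
    eqlev N r u = eqlev N r s := by
  refine le_antisymm ?_ (min_eq_left h.le ▸ min_eqlev_le_eqlev r s u)
  by_contra! hlt
  have := min_eqlev_le_eqlev (N := N) r u s
  rw [eqlev_comm u s] at this
  exact (lt_min hlt h).not_ge this

theorem reduce_preserves_eqlev_general (N : LPN P T Act) (r s r' s' : P → ℕ)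
    (h : eqlev N r s < eqlev N r' s') (h4 : s' ≤ s) :
    eqlev N r ((s - s') + r') = eqlev N r s := by
  refine eqlev_eq_of_lt (h.trans_le ?_)
  calc eqlev N r' s' ≤ eqlev N (r' + (s - s')) (s' + (s - s')) := eqlev_le_eqlev_add_right _ _ _
    _ = eqlev N s ((s - s') + r') := by rw [add_tsub_cancel_of_le h4, add_comm, eqlev_comm]

/-- The REDUCE step preserves the equivalence level: if `eqlev(r',s') > eqlev(r,s)`, with
`r' ≤ r` and `s' ≤ s`, then `eqlev(r, (s − s') + r') = eqlev(r,s)`. -/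
theorem reduce_preserves_eqlev (N : LPN P T Act) (r s r' s' : P → ℕ)
    (h : eqlev N r s < eqlev N r' s') (h3 : r' ≤ r) (h4 : s' ≤ s) :
    eqlev N r ((s - s') + r') = eqlev N r s :=
  reduce_preserves_eqlev_general N r s r' s' h h4
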